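/- Let 0 ≤ λ₀ < λ₁ ≤ 1. Suppose that for every ε > 0 there exists an integer n₀ = n₀(ε) such that for every n ≥ n₀ and every pair of symmetric convex sets A, B ⊆ ℝ^n, ψ_{λ₁}(I_A, I_B) ≥ exp{−εn}·ψ_{λ₀}(I_A, I_B). Then for every n ≥ 1 and every pair of symmetric convex sets A, B ⊆ ℝ^n, ψ_{λ₁}(I_A, I_B) ≥ ψ_{λ₀}(I_A, I_B). In particular, if this hypothesis holds with λ₀ = 0 and λ₁ = 1, then μ_n(A ∩ B) ≥ μ_n(A)·μ_n(B) for all symmetric convex A, B ⊆ ℝ^n and all n ≥ 1. -/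

import Mathlib

open MeasureTheory Real

/-- The standard Gaussian measure on ℝⁿ. -/
noncomputable def stdGaussian (n : ℕ) : Measure (EuclideanSpace ℝ (Fin n)) :=
  volume.withDensity fun x =>
    ENNReal.ofReal ((2 * π) ^ (-(n : ℝ) / 2) * Real.exp (-‖x‖ ^ 2 / 2))

/-- The density `f_{2n}(x, y; λ)` of the correlated pair of standard Gaussians. -/
noncomputable def gaussPairDensity (n : ℕ) (l : ℝ)
    (x y : EuclideanSpace ℝ (Fin n)) : ℝ :=
  (2 * π) ^ (-(n : ℝ)) * (1 - l ^ 2) ^ (-(n : ℝ) / 2) *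
    Real.exp (-(‖x‖ ^ 2 + ‖y‖ ^ 2 - 2 * l * (inner ℝ x y : ℝ)) / (2 * (1 - l ^ 2)))

/-- `ψ_λ(u, v)` for `λ ∈ [0, 1)` is `∫∫ u(x) v(y) f_{2n}(x, y; λ) dx dy`, and
`ψ_1(u, v) = ∫ u v dμₙ`. -/
noncomputable def psi (n : ℕ) (u v : EuclideanSpace ℝ (Fin n) → ℝ) (l : ℝ) : ℝ :=
  if l = 1 then ∫ x, u x * v x ∂(stdGaussian n)
  else ∫ x, ∫ y, u x * v y * gaussPairDensity n l x y

/-!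
The key is tensorization: for the product sets `A^m, B^m ⊆ ℝ^{mn}` one has
`ψ_λ(I_{A^m}, I_{B^m}) = ψ_λ(I_A, I_B)^m`, because after splitting `ℝ^{mn}` into `m` blocks
of `n` coordinates the Gaussian densities (and the indicators) factor over the blocks.
As `A^m, B^m` are again symmetric convex, the hypothesis in dimension `mn` gives
`e^{-εmn} ψ_{λ₀}^m ≤ ψ_{λ₁}^m`; taking `m`-th roots, `e^{-εn} ψ_{λ₀} ≤ ψ_{λ₁}` for every
`ε > 0`, and `ε → 0` gives the claim. For `λ₀ = 0`, `λ₁ = 1` the two sides are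
`μₙ(A) μₙ(B)` and `μₙ(A ∩ B)`.
-/

open Filter Topology
open scoped ENNReal

noncomputable def gaussianDensity (n : ℕ) (x : EuclideanSpace ℝ (Fin n)) : ℝ :=
  (2 * π) ^ (-(n : ℝ) / 2) * exp (-‖x‖ ^ 2 / 2)

section Gaussian

variable {n : ℕ}

lemma gaussianDensity_nonneg (x : EuclideanSpace ℝ (Fin n)) : 0 ≤ gaussianDensity n x := by
  unfold gaussianDensity; positivity

variable (n) in
lemma continuous_gaussianDensity : Continuous (gaussianDensity n) := by
  unfold gaussianDensity; fun_prop

variable (n) in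
lemma integrable_gaussianDensity : Integrable (gaussianDensity n) := by
  have h := (GaussianFourier.integrable_cexp_neg_mul_sq_norm_add
    (V := EuclideanSpace ℝ (Fin n)) (b := 1 / 2) (by norm_num) 0 0).norm
  refine (h.congr (Eventually.of_forall fun x => ?_)).const_mul _
  simp only [inner_zero_left, Complex.ofReal_zero, mul_zero, add_zero]
  rw [show -(1 / 2 : ℂ) * (‖x‖ : ℂ) ^ 2 = ((-‖x‖ ^ 2 / 2 : ℝ) : ℂ) by push_cast; ring,
    Complex.norm_exp_ofReal]

instance : IsFiniteMeasure (stdGaussian n) :=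
  isFiniteMeasure_withDensity_ofReal (integrable_gaussianDensity n).2

lemma integral_stdGaussian (f : EuclideanSpace ℝ (Fin n) → ℝ) :
    ∫ x, f x ∂stdGaussian n = ∫ x, gaussianDensity n x * f x := by
  rw [show stdGaussian n = volume.withDensity fun x => ((gaussianDensity n x).toNNReal : ℝ≥0∞)
    from rfl, integral_withDensity_eq_integral_smul
    (continuous_gaussianDensity n).measurable.real_toNNReal]
  simp only [NNReal.smul_def, Real.coe_toNNReal _ (gaussianDensity_nonneg _), smul_eq_mul]

lemma gaussPairDensity_nonneg {l : ℝ} (hl : |l| ≤ 1) (x y : EuclideanSpace ℝ (Fin n)) :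
    0 ≤ gaussPairDensity n l x y := by
  have : 0 ≤ 1 - l ^ 2 := by nlinarith [sq_abs l, abs_nonneg l]
  unfold gaussPairDensity; positivity

lemma gaussPairDensity_zero (x y : EuclideanSpace ℝ (Fin n)) :
    gaussPairDensity n 0 x y = gaussianDensity n x * gaussianDensity n y := by
  have h2π : (2 * π) ^ (-(n : ℝ)) = (2 * π) ^ (-(n : ℝ) / 2) * (2 * π) ^ (-(n : ℝ) / 2) := by
    rw [← rpow_add (by positivity)]; ring_nf
  simp only [gaussPairDensity, gaussianDensity, h2π, ne_eq, OfNat.ofNat_ne_zero,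
    not_false_eq_true, zero_pow, sub_zero, one_rpow, mul_one, mul_zero, zero_mul]
  rw [show (-(‖x‖ ^ 2 + ‖y‖ ^ 2) / 2) = -‖x‖ ^ 2 / 2 + -‖y‖ ^ 2 / 2 by ring, exp_add]
  ring

end Gaussian

noncomputable def toBlocks (m n : ℕ) :
    EuclideanSpace ℝ (Fin (m * n)) ≃ᵐ (Fin m → EuclideanSpace ℝ (Fin n)) :=
  (MeasurableEquiv.toLp 2 _).symm.trans <|
    (MeasurableEquiv.piCongrLeft (fun _ => ℝ) finProdFinEquiv).symm.trans <|
      (MeasurableEquiv.curry _ _ ℝ).trans <|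
        MeasurableEquiv.piCongrRight fun _ => MeasurableEquiv.toLp 2 _

@[simp]
lemma toBlocks_apply {m n : ℕ} (x : EuclideanSpace ℝ (Fin (m * n))) (i : Fin m) (j : Fin n) :
    toBlocks m n x i j = x (finProdFinEquiv (i, j)) :=
  rfl

theorem measurePreserving_curry {ι κ X : Type*} [Fintype ι] [Fintype κ] [MeasurableSpace X]
    (μ : Measure X) [SigmaFinite μ] :
    MeasurePreserving (MeasurableEquiv.curry ι κ X) (Measure.pi fun _ => μ)
      (Measure.pi fun _ => Measure.pi fun _ => μ) := by
  refine MeasurePreserving.symm (MeasurableEquiv.curry ι κ X).symm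
    ⟨MeasurableEquiv.measurable _, (Measure.pi_eq fun s _ => ?_).symm⟩
  have hbox : (MeasurableEquiv.curry ι κ X).symm ⁻¹' Set.univ.pi s
      = Set.univ.pi fun i => Set.univ.pi fun j => s (i, j) := by
    ext f
    simp [MeasurableEquiv.coe_curry_symm]
  rw [MeasurableEquiv.map_apply, hbox, Measure.pi_pi]
  simp_rw [Measure.pi_pi]
  exact (Fintype.prod_prod_type fun p => μ (s p)).symm

theorem measurePreserving_toBlocks (m n : ℕ) :
    MeasurePreserving (toBlocks m n) volume volume :=
  (volume_preserving_pi fun _ => PiLp.volume_preserving_toLp (Fin n)).comp <|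
    (measurePreserving_curry volume).comp <|
      ((volume_measurePreserving_piCongrLeft (fun _ => ℝ) finProdFinEquiv).symm _).comp <|
        EuclideanSpace.volume_preserving_symm_measurableEquiv_toLp _

lemma inner_eq_sum_inner_toBlocks {m n : ℕ} (x y : EuclideanSpace ℝ (Fin (m * n))) :
    inner ℝ x y = ∑ i, inner ℝ (toBlocks m n x i) (toBlocks m n y i) := by
  simp only [PiLp.inner_apply, toBlocks_apply]
  rw [← finProdFinEquiv.sum_comp, Fintype.sum_prod_type]

lemma norm_sq_eq_sum_norm_sq_toBlocks {m n : ℕ} (x : EuclideanSpace ℝ (Fin (m * n))) :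
    ‖x‖ ^ 2 = ∑ i, ‖toBlocks m n x i‖ ^ 2 := by
  simp only [← real_inner_self_eq_norm_sq, inner_eq_sum_inner_toBlocks]

lemma isLinearMap_toBlocks (m n : ℕ) : IsLinearMap ℝ (toBlocks m n) :=
  ⟨fun _ _ => rfl, fun _ _ => rfl⟩

theorem integral_eq_prod_of_toBlocks {m n : ℕ} {G : EuclideanSpace ℝ (Fin (m * n)) → ℝ}
    {f : Fin m → EuclideanSpace ℝ (Fin n) → ℝ} (hG : ∀ x, G x = ∏ i, f i (toBlocks m n x i)) :
    ∫ x, G x = ∏ i, ∫ y, f i y := by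
  simp_rw [hG]
  rw [(measurePreserving_toBlocks m n).integral_comp' (fun p => ∏ i, f i (p i))]
  exact integral_fintype_prod_eq_prod f

lemma prod_rpow_neg_natCast_div {c : ℝ} (hc : 0 ≤ c) (m n : ℕ) (k : ℝ) :
    ∏ _i : Fin m, c ^ (-(n : ℝ) / k) = c ^ (-((m * n : ℕ) : ℝ) / k) := by
  rw [Finset.prod_const, Finset.card_univ, Fintype.card_fin, ← rpow_natCast, ← rpow_mul hc]
  push_cast
  ring_nf

lemma gaussianDensity_eq_prod_toBlocks {m n : ℕ} (x : EuclideanSpace ℝ (Fin (m * n))) :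
    gaussianDensity (m * n) x = ∏ i, gaussianDensity n (toBlocks m n x i) := by
  simp only [gaussianDensity, Finset.prod_mul_distrib, ← exp_sum,
    prod_rpow_neg_natCast_div (by positivity : (0 : ℝ) ≤ 2 * π), norm_sq_eq_sum_norm_sq_toBlocks,
    ← Finset.sum_div, Finset.sum_neg_distrib]

-- `|l| ≤ 1` keeps the base of the real power `(1 - l ^ 2) ^ (-n / 2)` nonnegative.
lemma gaussPairDensity_eq_prod_toBlocks {m n : ℕ} {l : ℝ} (hl : |l| ≤ 1)
    (x y : EuclideanSpace ℝ (Fin (m * n))) :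
    gaussPairDensity (m * n) l x y
      = ∏ i, gaussPairDensity n l (toBlocks m n x i) (toBlocks m n y i) := by
  have hl' : 0 ≤ 1 - l ^ 2 := by nlinarith [sq_abs l, abs_nonneg l]
  have h2π := prod_rpow_neg_natCast_div (by positivity : (0 : ℝ) ≤ 2 * π) m n 1
  simp only [div_one] at h2π
  simp only [gaussPairDensity, Finset.prod_mul_distrib, ← exp_sum, h2π,
    prod_rpow_neg_natCast_div hl', norm_sq_eq_sum_norm_sq_toBlocks, inner_eq_sum_inner_toBlocks,
    ← Finset.sum_div, Finset.sum_neg_distrib, Finset.sum_sub_distrib, Finset.sum_add_distrib,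
    Finset.mul_sum]

section Psi

variable {n : ℕ}

lemma psi_one (u v : EuclideanSpace ℝ (Fin n) → ℝ) :
    psi n u v 1 = ∫ x, u x * v x ∂stdGaussian n :=
  if_pos rfl

lemma psi_of_ne_one {l : ℝ} (hl : l ≠ 1) (u v : EuclideanSpace ℝ (Fin n) → ℝ) :
    psi n u v l = ∫ x, ∫ y, u x * v y * gaussPairDensity n l x y :=
  if_neg hl

lemma psi_zero (u v : EuclideanSpace ℝ (Fin n) → ℝ) :
    psi n u v 0 = (∫ x, u x ∂stdGaussian n) * ∫ y, v y ∂stdGaussian n := by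
  simp only [psi_of_ne_one zero_ne_one, gaussPairDensity_zero, integral_stdGaussian]
  rw [← integral_mul_const]
  congr 1 with x
  rw [← integral_const_mul]
  congr 1 with y
  ring

lemma psi_nonneg {u v : EuclideanSpace ℝ (Fin n) → ℝ} (hu : 0 ≤ u) (hv : 0 ≤ v) {l : ℝ}
    (hl : |l| ≤ 1) : 0 ≤ psi n u v l := by
  unfold psi
  split_ifs
  · exact integral_nonneg fun x => mul_nonneg (hu x) (hv x)
  · exact integral_nonneg fun x => integral_nonneg fun y =>
      mul_nonneg (mul_nonneg (hu x) (hv y)) (gaussPairDensity_nonneg hl x y)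

noncomputable def blockProd (m : ℕ) (u : EuclideanSpace ℝ (Fin n) → ℝ)
    (x : EuclideanSpace ℝ (Fin (m * n))) : ℝ :=
  ∏ i, u (toBlocks m n x i)

theorem psi_blockProd (m : ℕ) (u v : EuclideanSpace ℝ (Fin n) → ℝ) {l : ℝ} (hl : |l| ≤ 1) :
    psi (m * n) (blockProd m u) (blockProd m v) l = psi n u v l ^ m := by
  rcases eq_or_ne l 1 with rfl | hl1
  · simp only [psi_one, integral_stdGaussian]
    rw [integral_eq_prod_of_toBlocks (f := fun _ x => gaussianDensity n x * (u x * v x))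
      fun x => ?_, Finset.prod_const, Finset.card_univ, Fintype.card_fin]
    simp only [gaussianDensity_eq_prod_toBlocks, blockProd, ← Finset.prod_mul_distrib]
  · simp only [psi_of_ne_one hl1]
    have hfactor (x : EuclideanSpace ℝ (Fin (m * n))) :
        ∫ y, blockProd m u x * blockProd m v y * gaussPairDensity (m * n) l x y
          = ∏ i, ∫ b, u (toBlocks m n x i) * v b * gaussPairDensity n l (toBlocks m n x i) b :=
      integral_eq_prod_of_toBlocks fun y => by
        simp only [blockProd, gaussPairDensity_eq_prod_toBlocks hl, ← Finset.prod_mul_distrib]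
    rw [integral_eq_prod_of_toBlocks (f := fun _ a => ∫ b, u a * v b * gaussPairDensity n l a b)
      hfactor, Finset.prod_const, Finset.card_univ, Fintype.card_fin]

def blockPower (m : ℕ) (A : Set (EuclideanSpace ℝ (Fin n))) :
    Set (EuclideanSpace ℝ (Fin (m * n))) :=
  toBlocks m n ⁻¹' Set.univ.pi fun _ => A

lemma indicator_blockPower (m : ℕ) (A : Set (EuclideanSpace ℝ (Fin n))) :
    (blockPower m A).indicator 1 = blockProd m (A.indicator 1) := by
  ext x
  rw [blockProd, ← Set.indicator_pi_one_apply, Finset.coe_univ]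
  rfl

lemma Convex.blockPower {A : Set (EuclideanSpace ℝ (Fin n))} (hA : Convex ℝ A) (m : ℕ) :
    Convex ℝ (blockPower m A) :=
  (convex_pi fun _ _ => hA).is_linear_preimage (isLinearMap_toBlocks m n)

lemma mem_blockPower_iff_neg_mem {A : Set (EuclideanSpace ℝ (Fin n))}
    (hA : ∀ x, x ∈ A ↔ -x ∈ A) (m : ℕ) (x : EuclideanSpace ℝ (Fin (m * n))) :
    x ∈ blockPower m A ↔ -x ∈ blockPower m A := by
  simp only [blockPower, Set.mem_preimage, Set.mem_univ_pi, (isLinearMap_toBlocks m n).map_neg,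
    Pi.neg_apply, ← hA]

end Psi

lemma integral_indicator_one₀ {X : Type*} [MeasurableSpace X] {μ : Measure X} {s : Set X}
    (hs : NullMeasurableSet s μ) : ∫ x, s.indicator 1 x ∂μ = μ.real s := by
  rw [integral_indicator₀ hs, Pi.one_def, setIntegral_const, smul_eq_mul, mul_one]

section Indicator

variable {n : ℕ} {A B : Set (EuclideanSpace ℝ (Fin n))}

lemma Convex.nullMeasurableSet_stdGaussian (hA : Convex ℝ A) :
    NullMeasurableSet A (stdGaussian n) :=
  (hA.nullMeasurableSet (μ := volume)).mono_ac (withDensity_absolutelyContinuous _ _)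

lemma psi_indicator_zero (hA : NullMeasurableSet A (stdGaussian n))
    (hB : NullMeasurableSet B (stdGaussian n)) :
    psi n (A.indicator 1) (B.indicator 1) 0 = (stdGaussian n).real A * (stdGaussian n).real B := by
  rw [psi_zero, integral_indicator_one₀ hA, integral_indicator_one₀ hB]

lemma psi_indicator_one (hA : NullMeasurableSet A (stdGaussian n))
    (hB : NullMeasurableSet B (stdGaussian n)) :
    psi n (A.indicator 1) (B.indicator 1) 1 = (stdGaussian n).real (A ∩ B) := by
  rw [psi_one, ← integral_indicator_one₀ (hA.inter hB), Set.inter_indicator_one]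
  rfl

theorem stdGaussian_mul_le_of_psi_zero_le_psi_one (hA : NullMeasurableSet A (stdGaussian n))
    (hB : NullMeasurableSet B (stdGaussian n))
    (h : psi n (A.indicator 1) (B.indicator 1) 0 ≤ psi n (A.indicator 1) (B.indicator 1) 1) :
    stdGaussian n A * stdGaussian n B ≤ stdGaussian n (A ∩ B) := by
  rw [psi_indicator_zero hA hB, psi_indicator_one hA hB, measureReal_def, measureReal_def,
    measureReal_def, ← ENNReal.toReal_mul] at h
  exact (ENNReal.toReal_le_toReal (by finiteness) (measure_ne_top _ _)).1 h

end Indicator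

lemma le_of_forall_exp_neg_mul_le {a b c : ℝ} (h : ∀ ε > 0, exp (-ε * c) * a ≤ b) : a ≤ b := by
  have hlim : Tendsto (fun ε => exp (-ε * c) * a) (𝓝[>] 0) (𝓝 a) := by
    have : Continuous fun ε : ℝ => exp (-ε * c) * a := by fun_prop
    simpa using (this.tendsto 0).mono_left nhdsWithin_le_nhds
  exact le_of_tendsto hlim (eventually_nhdsWithin_of_forall h)

/-- Tensorization lemma: if `ψ_{λ₁}(I_A, I_B) ≥ e^{−εn} ψ_{λ₀}(I_A, I_B)` for every
`ε > 0`, every large enough `n` and all symmetric convex `A, B ⊆ ℝⁿ`, then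
`ψ_{λ₁}(I_A, I_B) ≥ ψ_{λ₀}(I_A, I_B)` for all `n ≥ 1` and all symmetric convex `A, B`;
in particular, when `λ₀ = 0` and `λ₁ = 1` this yields the Gaussian correlation
inequality `μₙ(A ∩ B) ≥ μₙ(A) μₙ(B)`. -/
theorem psi_monotone_of_asymptotic (lam₀ lam₁ : ℝ)
    (h₀ : 0 ≤ lam₀) (h₀₁ : lam₀ < lam₁) (h₁ : lam₁ ≤ 1)
    (hyp : ∀ ε : ℝ, 0 < ε → ∃ n₀ : ℕ, ∀ n : ℕ, n₀ ≤ n →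
      ∀ A B : Set (EuclideanSpace ℝ (Fin n)),
        Convex ℝ A → (∀ x, x ∈ A ↔ -x ∈ A) →
        Convex ℝ B → (∀ x, x ∈ B ↔ -x ∈ B) →
        Real.exp (-ε * n) * psi n (A.indicator 1) (B.indicator 1) lam₀
          ≤ psi n (A.indicator 1) (B.indicator 1) lam₁) :
    (∀ n : ℕ, 1 ≤ n → ∀ A B : Set (EuclideanSpace ℝ (Fin n)),
      Convex ℝ A → (∀ x, x ∈ A ↔ -x ∈ A) →
      Convex ℝ B → (∀ x, x ∈ B ↔ -x ∈ B) →
      psi n (A.indicator 1) (B.indicator 1) lam₀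
        ≤ psi n (A.indicator 1) (B.indicator 1) lam₁) ∧
    (lam₀ = 0 → lam₁ = 1 →
      ∀ n : ℕ, 1 ≤ n → ∀ A B : Set (EuclideanSpace ℝ (Fin n)),
        Convex ℝ A → (∀ x, x ∈ A ↔ -x ∈ A) →
        Convex ℝ B → (∀ x, x ∈ B ↔ -x ∈ B) →
        stdGaussian n A * stdGaussian n B ≤ stdGaussian n (A ∩ B)) := by
  have hl₀ : |lam₀| ≤ 1 := abs_le.2 ⟨by linarith, by linarith⟩
  have hl₁ : |lam₁| ≤ 1 := abs_le.2 ⟨by linarith, h₁⟩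
  have hmono : ∀ n : ℕ, 1 ≤ n → ∀ A B : Set (EuclideanSpace ℝ (Fin n)),
      Convex ℝ A → (∀ x, x ∈ A ↔ -x ∈ A) → Convex ℝ B → (∀ x, x ∈ B ↔ -x ∈ B) →
      psi n (A.indicator 1) (B.indicator 1) lam₀
        ≤ psi n (A.indicator 1) (B.indicator 1) lam₁ := by
    intro n hn A B hAc hAs hBc hBs
    refine le_of_forall_exp_neg_mul_le (c := n) fun ε hε => ?_
    obtain ⟨n₀, hn₀⟩ := hyp ε hε
    set m := max n₀ 1
    have hexp : exp (-ε * ((m * n : ℕ) : ℝ)) = exp (-ε * n) ^ m := by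
      rw [← exp_nat_mul]; push_cast; ring_nf
    have hpow := hn₀ (m * n) ((le_max_left _ _).trans (Nat.le_mul_of_pos_right _ hn))
      _ _ (hAc.blockPower m) (mem_blockPower_iff_neg_mem hAs m)
      (hBc.blockPower m) (mem_blockPower_iff_neg_mem hBs m)
    rw [indicator_blockPower, indicator_blockPower, psi_blockProd _ _ _ hl₀,
      psi_blockProd _ _ _ hl₁, hexp, ← mul_pow] at hpow
    exact le_of_pow_le_pow_left₀ (by omega)
      (psi_nonneg (Set.indicator_nonneg fun _ _ => zero_le_one)
        (Set.indicator_nonneg fun _ _ => zero_le_one) hl₁) hpow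
  refine ⟨hmono, ?_⟩
  rintro rfl rfl n hn A B hAc hAs hBc hBs
  exact stdGaussian_mul_le_of_psi_zero_le_psi_one hAc.nullMeasurableSet_stdGaussian
    hBc.nullMeasurableSet_stdGaussian (hmono n hn A B hAc hAs hBc hBs)
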